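/- arXiv:2106.05710 — 4 statements merged into one kernel-verified Lean document; each statement's English description precedes it below -/
import Mathlib

section
/- Let a_1,...,a_N be positive reals with a_i ≤ 1/4 for all i, and D = -(1/Σa_j) Ṡ Ṡᵀ + Diag(Ṡ). Then every eigenvalue λ of D satisfies 0 ≤ λ ≤ 1/4. -/
/-!
The Rayleigh quotient of `D` at `u` is `(∑ aᵢuᵢ² - (∑ aᵢuᵢ)² / ∑ aᵢ) / ∑ uᵢ²`. By the weighted
Cauchy–Schwarz inequality the subtracted term lies between `0` and `∑ aᵢuᵢ²`, so the quotient lies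
between `0` and `max aᵢ ≤ 1/4`; at an eigenvector it equals the eigenvalue.
-/

open Matrix Finset

section WeightedSums

variable {ι : Type*} [Fintype ι] {a : ι → ℝ} (u : ι → ℝ)

theorem sq_sum_mul_le_sum_mul_sum_mul_sq (ha : ∀ i, 0 ≤ a i) :
    (∑ i, a i * u i) ^ 2 ≤ (∑ i, a i) * ∑ i, a i * u i ^ 2 :=
  sum_sq_le_sum_mul_sum_of_sq_le_mul _ (fun i _ ↦ ha i)
    (fun i _ ↦ mul_nonneg (ha i) (sq_nonneg _)) fun i _ ↦ le_of_eq (by ring)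

theorem sq_sum_mul_div_sum_le (ha : ∀ i, 0 ≤ a i) :
    (∑ i, a i * u i) ^ 2 / ∑ i, a i ≤ ∑ i, a i * u i ^ 2 :=
  div_le_of_le_mul₀ (sum_nonneg fun i _ ↦ ha i)
    (sum_nonneg fun i _ ↦ mul_nonneg (ha i) (sq_nonneg _))
    ((sq_sum_mul_le_sum_mul_sum_mul_sq u ha).trans_eq (mul_comm _ _))

end WeightedSums

section QuadraticForm

variable {ι : Type*} [Fintype ι] [DecidableEq ι] {a : ι → ℝ} {D : Matrix ι ι ℝ}

theorem dotProduct_mulVec_eq_of_entries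
    (hD : ∀ i j, D i j = -(a i * a j) / (∑ k, a k) + if i = j then a i else 0) (u : ι → ℝ) :
    u ⬝ᵥ D *ᵥ u = ∑ i, a i * u i ^ 2 - (∑ i, a i * u i) ^ 2 / ∑ i, a i := by
  have hD' : D = diagonal a - (∑ k, a k)⁻¹ • vecMulVec a a := by
    ext i j
    rw [hD, Matrix.sub_apply, Matrix.smul_apply, diagonal_apply, vecMulVec_apply]
    ring
  simp only [hD', sub_mulVec, smul_mulVec, vecMulVec_mulVec, dotProduct_sub, dotProduct_smul]
  have hdiag : u ⬝ᵥ diagonal a *ᵥ u = ∑ i, a i * u i ^ 2 := by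
    simp only [dotProduct, mulVec_diagonal]
    exact sum_congr rfl fun i _ ↦ by ring
  rw [hdiag, op_smul_eq_mul, smul_eq_mul, dotProduct_comm u a, dotProduct, div_eq_inv_mul, sq]

theorem dotProduct_mulVec_nonneg_of_entries (ha : ∀ i, 0 ≤ a i)
    (hD : ∀ i j, D i j = -(a i * a j) / (∑ k, a k) + if i = j then a i else 0) (u : ι → ℝ) :
    0 ≤ u ⬝ᵥ D *ᵥ u := by
  rw [dotProduct_mulVec_eq_of_entries hD, sub_nonneg]
  exact sq_sum_mul_div_sum_le u ha

theorem dotProduct_mulVec_le_of_entries {c : ℝ} (ha : ∀ i, 0 ≤ a i) (hac : ∀ i, a i ≤ c)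
    (hD : ∀ i j, D i j = -(a i * a j) / (∑ k, a k) + if i = j then a i else 0) (u : ι → ℝ) :
    u ⬝ᵥ D *ᵥ u ≤ c * (u ⬝ᵥ u) := by
  have hsub : 0 ≤ (∑ i, a i * u i) ^ 2 / ∑ i, a i :=
    div_nonneg (sq_nonneg _) (sum_nonneg fun i _ ↦ ha i)
  calc u ⬝ᵥ D *ᵥ u ≤ ∑ i, a i * u i ^ 2 := by
        rw [dotProduct_mulVec_eq_of_entries hD]; linarith
    _ ≤ ∑ i, c * u i ^ 2 := by gcongr with i; exact hac i
    _ = c * (u ⬝ᵥ u) := by simp only [dotProduct, ← mul_sum, sq]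

end QuadraticForm

theorem Matrix.dotProduct_mulVec_of_mulVec_eq_smul {ι : Type*} [Fintype ι] {D : Matrix ι ι ℝ}
    {l : ℝ} {u : ι → ℝ} (h : D *ᵥ u = l • u) : u ⬝ᵥ D *ᵥ u = l * (u ⬝ᵥ u) := by
  rw [h, dotProduct_smul, smul_eq_mul]

theorem stmt2_general (N : ℕ) (a : Fin N → ℝ) (ha : ∀ i, 0 < a i)
    (ha4 : ∀ i, a i ≤ 1 / 4)
    (D : Matrix (Fin N) (Fin N) ℝ)
    (hD : ∀ i j, D i j = -(a i * a j) / (∑ k, a k) + if i = j then a i else 0) :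
    ∀ (l : ℝ) (u : Fin N → ℝ), u ≠ 0 → D.mulVec u = l • u → 0 ≤ l ∧ l ≤ 1 / 4 := by
  intro l u hu huv
  have ha0 : ∀ i, 0 ≤ a i := fun i ↦ (ha i).le
  have hpos : 0 < u ⬝ᵥ u := by simpa using dotProduct_self_star_pos_iff.mpr hu
  have hrayleigh := dotProduct_mulVec_of_mulVec_eq_smul huv
  have hlow := dotProduct_mulVec_nonneg_of_entries ha0 hD u
  have hup := dotProduct_mulVec_le_of_entries ha0 ha4 hD u
  rw [hrayleigh] at hlow hup
  exact ⟨nonneg_of_mul_nonneg_left hlow hpos, le_of_mul_le_mul_right hup hpos⟩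

theorem stmt2 (N : ℕ) (hN : 0 < N) (a : Fin N → ℝ) (ha : ∀ i, 0 < a i)
    (ha4 : ∀ i, a i ≤ 1 / 4)
    (D : Matrix (Fin N) (Fin N) ℝ)
    (hD : ∀ i j, D i j = -(a i * a j) / (∑ k, a k) + if i = j then a i else 0) :
    ∀ (l : ℝ) (u : Fin N → ℝ), u ≠ 0 → D.mulVec u = l • u → 0 ≤ l ∧ l ≤ 1 / 4 :=
  stmt2_general N a ha ha4 D hD
end

section
/- Let k : ℝ^d → ℝ be a continuous radial kernel with k(0) = 1, ω a random vector in ℝ^d with symmetric distribution ℚ satisfying k(r) = E[e^{i ω·r}], and b an independent real random variable with symmetric distribution. Define φ(p) = √2 sin(ω·p + π/4 + b). Then E[φ(p) φ(p')] = k(p − p') for all p, p' ∈ ℝ^d. -/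
/-!
Since `√2 sin(u + π/4) √2 sin(v + π/4) = cos(u - v) + sin(u + v)`, the integrand splits as
`cos(ω·(p - p')) + sin(ω·(p + p') + 2b)`. The first term integrates to `Re 𝔼[e^{iω·(p - p')}]`,
which is `k(p - p')`. The second is an odd function of the pair `(ω, b)`, whose law is invariant
under `(ω, b) ↦ (-ω, -b)` because `ω` and `b` are independent and each symmetric, so it
integrates to zero.
-/

open MeasureTheory Finset ProbabilityTheory

theorem sqrt_two_mul_sin_mul_sqrt_two_mul_sin (x y c : ℝ) :
    (√2 * Real.sin (x + Real.pi / 4 + c)) * (√2 * Real.sin (y + Real.pi / 4 + c))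
      = Real.cos (x - y) + Real.sin (x + y + 2 * c) := by
  have hprod (u v : ℝ) :
      (√2 * Real.sin u) * (√2 * Real.sin v) = Real.cos (u - v) - Real.cos (u + v) := by
    rw [Real.cos_sub, Real.cos_add]
    linear_combination Real.sin u * Real.sin v * Real.mul_self_sqrt zero_le_two
  rw [hprod, show x + Real.pi / 4 + c - (y + Real.pi / 4 + c) = x - y by ring,
    show x + Real.pi / 4 + c + (y + Real.pi / 4 + c) = x + y + 2 * c + Real.pi / 2 by ring,
    Real.cos_add_pi_div_two, sub_neg_eq_add]

section

variable {Ω : Type*} [MeasurableSpace Ω] {μ : Measure Ω} [IsFiniteMeasure μ] {X : Ω → ℝ}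

theorem integrable_cos_comp (hX : Measurable X) : Integrable (fun a => Real.cos (X a)) μ :=
  .of_bound (by fun_prop) 1 (.of_forall fun _ => Real.abs_cos_le_one _)

theorem integrable_sin_comp (hX : Measurable X) : Integrable (fun a => Real.sin (X a)) μ :=
  .of_bound (by fun_prop) 1 (.of_forall fun _ => Real.abs_sin_le_one _)

theorem integral_cos_eq_re_integral_exp_I_mul (hX : Measurable X) :
    ∫ a, Real.cos (X a) ∂μ = (∫ a, Complex.exp (Complex.I * X a) ∂μ).re := by
  have hint : Integrable (fun a => Complex.exp (Complex.I * X a)) μ :=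
    .of_bound (by fun_prop) 1 (.of_forall fun a => by
      rw [mul_comm, Complex.norm_exp_ofReal_mul_I])
  rw [← RCLike.re_to_complex, ← integral_re hint]
  simp_rw [RCLike.re_to_complex, mul_comm Complex.I, Complex.exp_ofReal_mul_I_re]

end

namespace ProbabilityTheory

theorem IdentDistrib.integral_comp_eq_zero_of_odd {Ω E G : Type*} [MeasurableSpace Ω]
    [MeasurableSpace E] [Neg E] [NormedAddCommGroup G] [NormedSpace ℝ G] [MeasurableSpace G]
    [BorelSpace G] {μ : Measure Ω} {Z : Ω → E} {f : E → G}
    (hZ : IdentDistrib Z (fun a => -Z a) μ μ) (hf : Measurable f) (hodd : ∀ x, f (-x) = -f x) :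
    ∫ a, f (Z a) ∂μ = 0 := by
  have h := (hZ.comp hf).integral_eq
  simp only [Function.comp_def, hodd, integral_neg] at h
  have h2 : (2 : ℝ) • ∫ a, f (Z a) ∂μ = 0 := by
    rw [two_smul]
    nth_rw 1 [h]
    exact neg_add_cancel _
  exact (smul_eq_zero.mp h2).resolve_left two_ne_zero

theorem IndepFun.identDistrib_prodMk_neg {Ω E F : Type*} [MeasurableSpace Ω] [MeasurableSpace E]
    [MeasurableSpace F] [Neg E] [MeasurableNeg E] [Neg F] [MeasurableNeg F] {μ : Measure Ω}
    [IsFiniteMeasure μ] {X : Ω → E} {Y : Ω → F} (hXY : IndepFun X Y μ)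
    (hX : IdentDistrib X (fun a => -X a) μ μ) (hY : IdentDistrib Y (fun a => -Y a) μ μ) :
    IdentDistrib (fun a => (X a, Y a)) (fun a => -(X a, Y a)) μ μ :=
  hX.prodMk hY hXY (hXY.comp measurable_neg measurable_neg)

end ProbabilityTheory

theorem stmt9_general {Ω : Type*} [MeasurableSpace Ω] (P : Measure Ω) [IsProbabilityMeasure P]
    (d : ℕ) (w : Ω → Fin d → ℝ) (b : Ω → ℝ) (k : (Fin d → ℝ) → ℝ)
    (hw : Measurable w) (hb : Measurable b)
    (hindep : ProbabilityTheory.IndepFun w b P)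
    (hwsym : Measure.map w P = Measure.map (fun a => -w a) P)
    (hbsym : Measure.map b P = Measure.map (fun a => -b a) P)
    (hbochner : ∀ r : Fin d → ℝ,
      (k r : ℂ) = ∫ a, Complex.exp (Complex.I * ((∑ i, w a i * r i : ℝ) : ℂ)) ∂P) :
    ∀ p p' : Fin d → ℝ,
      (∫ a, (Real.sqrt 2 * Real.sin ((∑ i, w a i * p i) + Real.pi / 4 + b a)) *
            (Real.sqrt 2 * Real.sin ((∑ i, w a i * p' i) + Real.pi / 4 + b a)) ∂P)
        = k (p - p') := by
  intro p p'
  simp_rw [sqrt_two_mul_sin_mul_sqrt_two_mul_sin]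
  rw [integral_add (integrable_cos_comp (by fun_prop)) (integrable_sin_comp (by fun_prop))]
  have hcos : ∫ a, Real.cos ((∑ i, w a i * p i) - ∑ i, w a i * p' i) ∂P = k (p - p') := by
    have h := congrArg Complex.re (hbochner (p - p'))
    rw [Complex.ofReal_re, ← integral_cos_eq_re_integral_exp_I_mul (by fun_prop)] at h
    simpa only [Pi.sub_apply, mul_sub, sum_sub_distrib] using h.symm
  have hsym : IdentDistrib (fun a => (w a, b a)) (fun a => -(w a, b a)) P P :=
    hindep.identDistrib_prodMk_neg ⟨hw.aemeasurable, hw.neg.aemeasurable, hwsym⟩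
      ⟨hb.aemeasurable, hb.neg.aemeasurable, hbsym⟩
  have hsin : ∫ a, Real.sin ((∑ i, w a i * p i) + (∑ i, w a i * p' i) + 2 * b a) ∂P = 0 := by
    let f (x : (Fin d → ℝ) × ℝ) : ℝ :=
      Real.sin ((∑ i, x.1 i * p i) + (∑ i, x.1 i * p' i) + 2 * x.2)
    have hodd (x : (Fin d → ℝ) × ℝ) : f (-x) = -f x := by
      simp only [f, Prod.fst_neg, Prod.snd_neg, Pi.neg_apply, neg_mul, sum_neg_distrib,
        ← Real.sin_neg]
      ring_nf
    exact hsym.integral_comp_eq_zero_of_odd (f := f) (by fun_prop) hodd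
  rw [hcos, hsin, add_zero]

theorem stmt9 {Ω : Type*} [MeasurableSpace Ω] (P : Measure Ω) [IsProbabilityMeasure P]
    (d : ℕ) (w : Ω → Fin d → ℝ) (b : Ω → ℝ) (k : (Fin d → ℝ) → ℝ)
    (hkc : Continuous k) (hk0 : k 0 = 1)
    (hrad : ∀ r r' : Fin d → ℝ, ∑ i, r i ^ 2 = ∑ i, r' i ^ 2 → k r = k r')
    (hw : Measurable w) (hb : Measurable b)
    (hindep : ProbabilityTheory.IndepFun w b P)
    (hwsym : Measure.map w P = Measure.map (fun a => -w a) P)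
    (hbsym : Measure.map b P = Measure.map (fun a => -b a) P)
    (hbochner : ∀ r : Fin d → ℝ,
      (k r : ℂ) = ∫ a, Complex.exp (Complex.I * ((∑ i, w a i * r i : ℝ) : ℂ)) ∂P) :
    ∀ p p' : Fin d → ℝ,
      (∫ a, (Real.sqrt 2 * Real.sin ((∑ i, w a i * p i) + Real.pi / 4 + b a)) *
            (Real.sqrt 2 * Real.sin ((∑ i, w a i * p' i) + Real.pi / 4 + b a)) ∂P)
        = k (p - p') :=
  stmt9_general P d w b k hw hb hindep hwsym hbsym hbochner
end

section
/- Let w ∈ ℝ^d be a Gaussian random vector with law N(0, (1/ℓ²) I_d) and b = 0. Define φ(p) = √2 sin(w·p + π/4). Then E[φ(p) φ(p')] = exp(−‖p − p'‖₂²/(2ℓ²)) for all p, p' ∈ ℝ^d. -/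
/-!
By the product-to-sum formula, `φ(p) φ(p') = cos (w·(p - p')) + sin (w·(p + p'))`. The expectations
of the two terms are the real and imaginary parts of the characteristic function of `w`, which for
the centred Gaussian `N(0, ℓ⁻² I)` is the real number `exp (-‖t‖² / (2ℓ²))`; so the sine term
vanishes and the cosine term gives the Gaussian kernel.
-/

open MeasureTheory Finset

open ProbabilityTheory Complex
open scoped NNReal

section
variable {α : Type*} [MeasurableSpace α] {μ : Measure α} [IsFiniteMeasure μ] {f : α → ℝ}

lemma integrable_cexp_mul_I (hf : AEMeasurable f μ) : Integrable (fun x => cexp (f x * I)) μ := by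
  refine Integrable.of_bound (by fun_prop) 1 (Filter.Eventually.of_forall fun x => ?_)
  simp [norm_exp_ofReal_mul_I]

lemma integrable_cos_comp_s10 (hf : AEMeasurable f μ) : Integrable (fun x => Real.cos (f x)) μ := by
  simpa [exp_ofReal_mul_I_re] using (integrable_cexp_mul_I hf).re

lemma integrable_sin_comp_s10 (hf : AEMeasurable f μ) : Integrable (fun x => Real.sin (f x)) μ := by
  simpa [exp_ofReal_mul_I_im] using (integrable_cexp_mul_I hf).im

lemma integral_cos_eq_re_integral_cexp (hf : AEMeasurable f μ) :
    ∫ x, Real.cos (f x) ∂μ = (∫ x, cexp (f x * I) ∂μ).re := by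
  simpa [exp_ofReal_mul_I_re] using integral_re (integrable_cexp_mul_I hf)

lemma integral_sin_eq_im_integral_cexp (hf : AEMeasurable f μ) :
    ∫ x, Real.sin (f x) ∂μ = (∫ x, cexp (f x * I) ∂μ).im := by
  simpa [exp_ofReal_mul_I_im] using integral_im (integrable_cexp_mul_I hf)
end

lemma integral_cexp_sum_mul_I_pi_gaussianReal {ι : Type*} [Fintype ι] (v : ℝ≥0) (u : ι → ℝ) :
    ∫ x, cexp ((∑ i, x i * u i : ℝ) * I) ∂(Measure.pi fun _ : ι => gaussianReal 0 v)
      = Real.exp (-(v * ∑ i, u i ^ 2) / 2) := by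
  have h := charFun_pi (μ := fun _ : ι => gaussianReal 0 v) (WithLp.toLp 2 u)
  rw [charFun_apply, integral_map (by fun_prop) (by fun_prop)] at h
  simp only [PiLp.inner_apply, RCLike.inner_apply, conj_trivial, mul_comm (u _),
    charFun_gaussianReal] at h
  rw [h, ← exp_sum]
  push_cast
  simp [Finset.mul_sum, Finset.sum_div, neg_div]

lemma sqrt_two_mul_sin_add_pi_div_four_mul (a b : ℝ) :
    (√2 * Real.sin (a + Real.pi / 4)) * (√2 * Real.sin (b + Real.pi / 4))
      = Real.cos (a - b) + Real.sin (a + b) := by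
  have h2 : √2 * √2 = 2 := Real.mul_self_sqrt (by norm_num)
  rw [Real.cos_sub, Real.sin_add, Real.sin_add a, Real.sin_add b, Real.cos_pi_div_four,
    Real.sin_pi_div_four]
  linear_combination (√2 * √2 + 2) / 4 * (Real.sin a + Real.cos a) * (Real.sin b + Real.cos b) * h2

theorem stmt10_general {Ω : Type*} [MeasurableSpace Ω] (P : Measure Ω)
    (d : ℕ) (ℓ : ℝ)
    (w : Ω → Fin d → ℝ) (hw : Measurable w)
    (hlaw : Measure.map w P
      = Measure.pi (fun _ : Fin d => ProbabilityTheory.gaussianReal 0 (Real.toNNReal (1 / ℓ ^ 2)))) :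
    ∀ p p' : Fin d → ℝ,
      (∫ a, (Real.sqrt 2 * Real.sin ((∑ i, w a i * p i) + Real.pi / 4)) *
            (Real.sqrt 2 * Real.sin ((∑ i, w a i * p' i) + Real.pi / 4)) ∂P)
        = Real.exp (-(∑ i, (p i - p' i) ^ 2) / (2 * ℓ ^ 2)) := by
  intro p p'
  have hmap := integral_map (μ := P) hw.aemeasurable (f := fun x : Fin d → ℝ =>
    (√2 * Real.sin ((∑ i, x i * p i) + Real.pi / 4)) *
      (√2 * Real.sin ((∑ i, x i * p' i) + Real.pi / 4))) (by fun_prop)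
  rw [hlaw] at hmap
  rw [← hmap]
  simp_rw [sqrt_two_mul_sin_add_pi_div_four_mul, ← Finset.sum_sub_distrib, ← Finset.sum_add_distrib,
    ← mul_sub, ← mul_add]
  have hlin (c : Fin d → ℝ) : Measurable fun x : Fin d → ℝ => ∑ i, x i * c i := by fun_prop
  rw [integral_add (integrable_cos_comp_s10 (hlin _).aemeasurable)
      (integrable_sin_comp_s10 (hlin _).aemeasurable),
    integral_cos_eq_re_integral_cexp (hlin _).aemeasurable,
    integral_sin_eq_im_integral_cexp (hlin _).aemeasurable,
    integral_cexp_sum_mul_I_pi_gaussianReal, integral_cexp_sum_mul_I_pi_gaussianReal, ofReal_re,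
    ofReal_im, add_zero, Real.coe_toNNReal _ (by positivity)]
  congr 1
  ring

theorem stmt10 {Ω : Type*} [MeasurableSpace Ω] (P : Measure Ω) [IsProbabilityMeasure P]
    (d : ℕ) (ℓ : ℝ) (hℓ : 0 < ℓ)
    (w : Ω → Fin d → ℝ) (hw : Measurable w)
    (hlaw : Measure.map w P
      = Measure.pi (fun _ : Fin d => ProbabilityTheory.gaussianReal 0 (Real.toNNReal (1 / ℓ ^ 2)))) :
    ∀ p p' : Fin d → ℝ,
      (∫ a, (Real.sqrt 2 * Real.sin ((∑ i, w a i * p i) + Real.pi / 4)) *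
            (Real.sqrt 2 * Real.sin ((∑ i, w a i * p' i) + Real.pi / 4)) ∂P)
        = Real.exp (-(∑ i, (p i - p' i) ^ 2) / (2 * ℓ ^ 2)) :=
  stmt10_general P d ℓ w hw hlaw
end

section
/- Let X, Y be jointly Gaussian real random variables with mean 0, Var(X) = Var(Y) = v, and let μ(a) = λ sin(ω a + π/4). Then E[μ(X)μ(Y)] = (λ²/2) exp(−(ω²/2) Var(X − Y)). -/
/-!
By product-to-sum, `sin (a + π/4) * sin (b + π/4) = (cos (a - b) + sin (a + b)) / 2`, so the
integrand is `λ²/2 * (cos (ω (X - Y)) + sin (ω (X + Y)))`. Both `X - Y` and `X + Y` are centred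
Gaussians, and the real and imaginary parts of the Gaussian characteristic function give
`E cos (ω (X - Y)) = exp (-ω² Var(X - Y) / 2)` and `E sin (ω (X + Y)) = 0`.
-/

open MeasureTheory ProbabilityTheory NNReal

section CharFun

open Complex

lemma integrable_cexp_mul_mul_I {μ : Measure ℝ} [IsFiniteMeasure μ] (t : ℝ) :
    Integrable (fun x : ℝ => cexp (t * x * I)) μ :=
  .of_bound (by fun_prop) 1 (.of_forall fun x => by rw [← ofReal_mul, norm_exp_ofReal_mul_I])

lemma re_charFun_eq_integral_cos {μ : Measure ℝ} [IsFiniteMeasure μ] (t : ℝ) :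
    (charFun μ t).re = ∫ x, Real.cos (t * x) ∂μ := by
  rw [charFun_apply_real, ← RCLike.re_to_complex, ← integral_re (integrable_cexp_mul_mul_I t)]
  refine integral_congr_ae (.of_forall fun x => ?_)
  simp only [← ofReal_mul, RCLike.re_to_complex, exp_ofReal_mul_I_re]

lemma im_charFun_eq_integral_sin {μ : Measure ℝ} [IsFiniteMeasure μ] (t : ℝ) :
    (charFun μ t).im = ∫ x, Real.sin (t * x) ∂μ := by
  rw [charFun_apply_real, ← RCLike.im_to_complex, ← integral_im (integrable_cexp_mul_mul_I t)]
  refine integral_congr_ae (.of_forall fun x => ?_)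
  simp only [← ofReal_mul, RCLike.im_to_complex, exp_ofReal_mul_I_im]

lemma charFun_gaussianReal_eq_ofReal_mul (μ : ℝ) (v : ℝ≥0) (t : ℝ) :
    charFun (gaussianReal μ v) t = Real.exp (-(v * t ^ 2 / 2)) * cexp ((t * μ : ℝ) * I) := by
  rw [charFun_gaussianReal, sub_eq_neg_add, exp_add, ofReal_exp]
  push_cast
  rfl

lemma integral_cos_mul_gaussianReal (μ : ℝ) (v : ℝ≥0) (t : ℝ) :
    ∫ x, Real.cos (t * x) ∂gaussianReal μ v
      = Real.exp (-(v * t ^ 2 / 2)) * Real.cos (t * μ) := by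
  rw [← re_charFun_eq_integral_cos, charFun_gaussianReal_eq_ofReal_mul, re_ofReal_mul,
    exp_ofReal_mul_I_re]

lemma integral_sin_mul_gaussianReal (μ : ℝ) (v : ℝ≥0) (t : ℝ) :
    ∫ x, Real.sin (t * x) ∂gaussianReal μ v
      = Real.exp (-(v * t ^ 2 / 2)) * Real.sin (t * μ) := by
  rw [← im_charFun_eq_integral_sin, charFun_gaussianReal_eq_ofReal_mul, im_ofReal_mul,
    exp_ofReal_mul_I_im]

end CharFun

lemma sin_add_pi_div_four_mul_sin_add_pi_div_four (a b : ℝ) :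
    Real.sin (a + Real.pi / 4) * Real.sin (b + Real.pi / 4)
      = (Real.cos (a - b) + Real.sin (a + b)) / 2 := by
  rw [Real.sin_add, Real.sin_add, Real.cos_sub, Real.sin_add, Real.sin_pi_div_four,
    Real.cos_pi_div_four]
  have h := Real.sq_sqrt (show (0 : ℝ) ≤ 2 by norm_num)
  linear_combination (Real.sin a * Real.sin b + Real.sin a * Real.cos b
    + Real.cos a * Real.sin b + Real.cos a * Real.cos b) / 4 * h

section RandomVariable

variable {Ω : Type*} {mΩ : MeasurableSpace Ω} {P : Measure Ω} {Z : Ω → ℝ}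

lemma integrable_cos_mul_comp [IsFiniteMeasure P] (hZ : AEMeasurable Z P) (t : ℝ) :
    Integrable (fun a => Real.cos (t * Z a)) P :=
  .of_bound (Real.continuous_cos.comp_aestronglyMeasurable (hZ.const_mul t).aestronglyMeasurable)
    1 (.of_forall fun _ => by simpa using Real.abs_cos_le_one _)

lemma integrable_sin_mul_comp [IsFiniteMeasure P] (hZ : AEMeasurable Z P) (t : ℝ) :
    Integrable (fun a => Real.sin (t * Z a)) P :=
  .of_bound (Real.continuous_sin.comp_aestronglyMeasurable (hZ.const_mul t).aestronglyMeasurable)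
    1 (.of_forall fun _ => by simpa using Real.abs_sin_le_one _)

namespace ProbabilityTheory

lemma hasLaw_of_map_eq {𝓧 : Type*} {m𝓧 : MeasurableSpace 𝓧} {μ : Measure 𝓧} [NeZero μ]
    {X : Ω → 𝓧} (h : P.map X = μ) : HasLaw X μ P :=
  ⟨aemeasurable_of_map_neZero (h ▸ inferInstance), h⟩

lemma HasLaw.integral_cos_mul_of_gaussianReal {μ : ℝ} {v : ℝ≥0}
    (hZ : HasLaw Z (gaussianReal μ v) P) (t : ℝ) :
    ∫ a, Real.cos (t * Z a) ∂P = Real.exp (-(v * t ^ 2 / 2)) * Real.cos (t * μ) := by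
  rw [← integral_cos_mul_gaussianReal, ← hZ.integral_comp (by fun_prop)]
  rfl

lemma HasLaw.integral_sin_mul_of_gaussianReal {μ : ℝ} {v : ℝ≥0}
    (hZ : HasLaw Z (gaussianReal μ v) P) (t : ℝ) :
    ∫ a, Real.sin (t * Z a) ∂P = Real.exp (-(v * t ^ 2 / 2)) * Real.sin (t * μ) := by
  rw [← integral_sin_mul_gaussianReal, ← hZ.integral_comp (by fun_prop)]
  rfl

end ProbabilityTheory

end RandomVariable

theorem stmt12_general {Ω : Type*} [MeasurableSpace Ω] (P : Measure Ω) [IsProbabilityMeasure P]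
    (X Y : Ω → ℝ)
    (hgauss : ∀ s t : ℝ, ∃ var : ℝ≥0,
      Measure.map (fun a => s * X a + t * Y a) P = ProbabilityTheory.gaussianReal 0 var)
    (lam ω : ℝ) :
    ∫ a, (lam * Real.sin (ω * X a + Real.pi / 4)) * (lam * Real.sin (ω * Y a + Real.pi / 4)) ∂P
      = lam ^ 2 / 2 * Real.exp (-(ω ^ 2 / 2) * variance (fun a => X a - Y a) P) := by
  obtain ⟨vDiff, hmapDiff⟩ := hgauss 1 (-1)
  obtain ⟨vSum, hmapSum⟩ := hgauss 1 1
  have hdiff : HasLaw (fun a => X a - Y a) (gaussianReal 0 vDiff) P :=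
    hasLaw_of_map_eq (by simpa [← sub_eq_add_neg] using hmapDiff)
  have hsum : HasLaw (fun a => X a + Y a) (gaussianReal 0 vSum) P :=
    hasLaw_of_map_eq (by simpa using hmapSum)
  calc _ = ∫ a, lam ^ 2 / 2 *
          (Real.cos (ω * (X a - Y a)) + Real.sin (ω * (X a + Y a))) ∂P := by
        refine integral_congr_ae (.of_forall fun a => ?_)
        dsimp only
        rw [mul_mul_mul_comm, sin_add_pi_div_four_mul_sin_add_pi_div_four, ← mul_sub, ← mul_add]
        ring
    _ = lam ^ 2 / 2 * Real.exp (-(vDiff * ω ^ 2 / 2)) := by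
        rw [integral_const_mul, integral_add (integrable_cos_mul_comp hdiff.aemeasurable ω)
          (integrable_sin_mul_comp hsum.aemeasurable ω)]
        simp [hdiff.integral_cos_mul_of_gaussianReal ω, hsum.integral_sin_mul_of_gaussianReal ω]
    _ = _ := by
        rw [hdiff.variance_eq, variance_id_gaussianReal]
        congr 2
        ring

theorem stmt12 {Ω : Type*} [MeasurableSpace Ω] (P : Measure Ω) [IsProbabilityMeasure P]
    (X Y : Ω → ℝ) (hX : Measurable X) (hY : Measurable Y)
    (v : ℝ≥0) (hvX : variance X P = v) (hvY : variance Y P = v)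
    (hmX : ∫ a, X a ∂P = 0) (hmY : ∫ a, Y a ∂P = 0)
    (hgauss : ∀ s t : ℝ, ∃ var : ℝ≥0,
      Measure.map (fun a => s * X a + t * Y a) P = ProbabilityTheory.gaussianReal 0 var)
    (lam ω : ℝ) :
    ∫ a, (lam * Real.sin (ω * X a + Real.pi / 4)) * (lam * Real.sin (ω * Y a + Real.pi / 4)) ∂P
      = lam ^ 2 / 2 * Real.exp (-(ω ^ 2 / 2) * variance (fun a => X a - Y a) P) :=
  stmt12_general P X Y hgauss lam ω
end
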